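/- For any expression 𝐰 = (i_1,…,i_n) and any v ∈ W with v ≤ m_*(𝐰), the left-most subexpression 𝐯 of v in 𝐰, after removing the identity entries, is a reduced expression for v. -/

import Mathlib

variable {B : Type*} {W : Type*} [Group W] {M : CoxeterMatrix B}

/-- The Demazure product `m_*(𝐰)` of an expression `𝐰 = (i_1, …, i_n)`:
fold from the right, multiplying by `s_i` only if this increases length. -/
noncomputable def demazureProd (cs : CoxeterSystem M W) (ω : List B) : W :=
  ω.foldr (fun i w =>
    if cs.length (cs.simple i * w) < cs.length w then w else cs.simple i * w) 1

/-- The Bruhat order on `W`: `u ≤ w` iff some reduced expression for `w` contains a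
subword whose product is `u`. -/
def bruhatLE (cs : CoxeterSystem M W) (u w : W) : Prop :=
  ∃ ω : List B, cs.IsReduced ω ∧ cs.wordProd ω = w ∧
    ∃ ω' : List B, ω'.Sublist ω ∧ cs.wordProd ω' = u

/-- The list of letters of the left-most subexpression for `v` in `𝐰`, with the identity
entries removed: processing `𝐰` from the left, a letter `i` is selected exactly when
`ℓ(s_i v) < ℓ(v)`, in which case `v` is replaced by `s_i v`. -/
noncomputable def leftMostWord (cs : CoxeterSystem M W) : List B → W → List B
  | [], _ => []
  | i :: rest, v =>
    if cs.length (cs.simple i * v) < cs.length v then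
      i :: leftMostWord cs rest (cs.simple i * v)
    else
      leftMostWord cs rest v

namespace LMAux

open List CoxeterSystem Relation

attribute [local instance] Classical.propDecidable

variable (cs : CoxeterSystem M W)

variable (cs : CoxeterSystem M W)

local prefix:100 "s" => cs.simple
local prefix:100 "π" => cs.wordProd
local prefix:100 "ℓ" => cs.length
local prefix:100 "ris" => cs.rightInvSeq
local prefix:100 "lis" => cs.leftInvSeq

lemma conj_eq_simple_iff (i : B) (t : W) :
    s i * t * (s i)⁻¹ = s i ↔ t = s i := by
  constructor
  · intro h
    have := congrArg (fun x => (s i)⁻¹ * x * s i) h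
    simpa [mul_assoc] using this
  · intro h; rw [h]; group

/-- Building block of the reflection permutation representation. -/
noncomputable def sigma (i : B) : Equiv.Perm (W × ℤˣ) where
  toFun p := (s i * p.1 * (s i)⁻¹, if p.1 = s i then -p.2 else p.2)
  invFun p := (s i * p.1 * (s i)⁻¹, if p.1 = s i then -p.2 else p.2)
  left_inv p := by
    obtain ⟨t, e⟩ := p
    show (s i * (s i * t * (s i)⁻¹) * (s i)⁻¹,
      if (s i * t * (s i)⁻¹) = s i then -(if t = s i then -e else e)
        else (if t = s i then -e else e)) = (t, e)
    have hfst : s i * (s i * t * (s i)⁻¹) * (s i)⁻¹ = t := by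
      simp [cs.inv_simple, mul_assoc, cs.simple_mul_simple_self, cs.simple_mul_simple_cancel_left]
    rw [hfst]
    by_cases h : t = s i
    · rw [if_pos ((conj_eq_simple_iff cs i t).mpr h), if_pos h, neg_neg]
    · rw [if_neg (fun hc => h ((conj_eq_simple_iff cs i t).mp hc)), if_neg h]
  right_inv p := by
    obtain ⟨t, e⟩ := p
    show (s i * (s i * t * (s i)⁻¹) * (s i)⁻¹,
      if (s i * t * (s i)⁻¹) = s i then -(if t = s i then -e else e)
        else (if t = s i then -e else e)) = (t, e)
    have hfst : s i * (s i * t * (s i)⁻¹) * (s i)⁻¹ = t := by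
      simp [cs.inv_simple, mul_assoc, cs.simple_mul_simple_self, cs.simple_mul_simple_cancel_left]
    rw [hfst]
    by_cases h : t = s i
    · rw [if_pos ((conj_eq_simple_iff cs i t).mpr h), if_pos h, neg_neg]
    · rw [if_neg (fun hc => h ((conj_eq_simple_iff cs i t).mp hc)), if_neg h]

/-- Product of the `sigma`s along a word. -/
noncomputable def Sig (ω : List B) : Equiv.Perm (W × ℤˣ) := (ω.map (sigma cs)).prod

@[simp] lemma Sig_nil : Sig cs [] = 1 := rfl

lemma Sig_cons (i : B) (ω : List B) : Sig cs (i :: ω) = sigma cs i * Sig cs ω := by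
  simp [Sig]

lemma sigma_apply (i : B) (t : W) (e : ℤˣ) :
    sigma cs i (t, e) = (s i * t * (s i)⁻¹, if t = s i then -e else e) := rfl

lemma ris_cons (i : B) (ω : List B) :
    ris (i :: ω) = ((π ω)⁻¹ * s i * π ω) :: ris ω := rfl

lemma Sig_apply (ω : List B) (t : W) (e : ℤˣ) :
    Sig cs ω (t, e) = (π ω * t * (π ω)⁻¹,
      if Even ((ris ω).count t) then e else -e) := by
  induction ω generalizing e with
  | nil => simp
  | cons i ω ih =>
    rw [Sig_cons, Equiv.Perm.mul_apply, ih, sigma_apply, ris_cons, wordProd_cons]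
    have hcond : (π ω * t * (π ω)⁻¹ = s i) ↔ (t = (π ω)⁻¹ * s i * π ω) := by
      constructor
      · intro h; rw [← h]; group
      · intro h; rw [h]; group
    have hcount : ((((π ω)⁻¹ * s i * π ω) :: ris ω).count t)
        = (ris ω).count t + if t = (π ω)⁻¹ * s i * π ω then 1 else 0 := by
      simp only [List.count_cons, beq_iff_eq]
      congr 1
      by_cases h : t = (π ω)⁻¹ * s i * π ω
      · rw [if_pos h, if_pos h.symm]
      · rw [if_neg h, if_neg (fun hh => h hh.symm)]
    rw [hcount, Prod.mk.injEq]
    refine ⟨by group, ?_⟩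
    by_cases hc : t = (π ω)⁻¹ * s i * π ω
    · rw [if_pos (hcond.mpr hc), if_pos hc]
      rcases Nat.even_or_odd ((ris ω).count t) with h | h
      · rw [if_pos h, if_neg (by simp [Nat.even_add_one, h])]
      · rw [if_neg (by simpa using Nat.not_even_iff_odd.mpr h),
          if_pos (by simp [Nat.even_add_one, Nat.not_even_iff_odd.mpr h]), neg_neg]
    · rw [if_neg (fun hh => hc (hcond.mp hh)), if_neg hc, add_zero]

/-- The alternating word `[i, j, i, j, …]` of length `2 * m`. -/
def pl (i j : B) : ℕ → List B
  | 0 => []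
  | m + 1 => i :: j :: pl i j m

lemma wordProd_pl (i j : B) (m : ℕ) : π (pl i j m) = (s i * s j) ^ m := by
  induction m with
  | zero => simp [pl]
  | succ m ih => rw [pl, wordProd_cons, wordProd_cons, ih, pow_succ']; group

lemma Sig_pl (i j : B) (m : ℕ) : Sig cs (pl i j m) = (sigma cs i * sigma cs j) ^ m := by
  induction m with
  | zero => simp [pl, Sig]
  | succ m ih => rw [pl, Sig_cons, Sig_cons, ih, pow_succ']; group

lemma sj_pow (i j : B) (m : ℕ) : s j * (s i * s j) ^ m = (s j * s i) ^ m * s j := by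
  induction m with
  | zero => simp
  | succ m ih =>
    rw [pow_succ', ← mul_assoc, show s j * (s i * s j) = s j * s i * s j from (mul_assoc _ _ _).symm,
      mul_assoc (s j * s i) (s j) ((s i * s j) ^ m), ih, ← mul_assoc, ← pow_succ']

lemma ris_pl (i j : B) (m : ℕ) :
    ris (pl i j m) = ((List.range (2 * m)).reverse).map (fun k => (s j * s i) ^ k * s j) := by
  induction m with
  | zero => simp [pl]
  | succ m ih =>
    have h2 : 2 * (m + 1) = (2 * m + 1) + 1 := by ring
    rw [h2, List.range_succ, List.range_succ, pl]
    rw [ris_cons, ris_cons, ih, wordProd_cons, wordProd_pl]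
    simp only [List.reverse_append, List.reverse_cons, List.reverse_nil, List.nil_append,
      List.map_cons, List.cons_append, List.map_append]
    have hinv : ((s i * s j) ^ m)⁻¹ = (s j * s i) ^ m := by
      rw [← inv_pow, mul_inv_rev, cs.inv_simple, cs.inv_simple]
    congr 1
    · -- first entry
      rw [mul_inv_rev, cs.inv_simple, hinv, sj_pow]
      have hx : (s j * s i) ^ m * s j * s i * ((s j * s i) ^ m * s j)
          = (s j * s i) ^ m * (s j * s i) * (s j * s i) ^ m * s j := by group
      rw [hx, ← pow_succ, mul_assoc ((s j * s i) ^ (m + 1)) _ _,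
        show (s j * s i) ^ (m + 1) * ((s j * s i) ^ m * s j)
          = ((s j * s i) ^ (m + 1) * (s j * s i) ^ m) * s j from (mul_assoc _ _ _).symm,
        ← pow_add]
      congr 2
      omega
    · congr 1
      rw [hinv, mul_assoc, sj_pow, ← mul_assoc, ← pow_add]
      congr 2
      omega

lemma liftable : M.IsLiftable (fun i => sigma cs i) := by
  intro i j
  by_cases hM : M i j = 0
  · rw [hM, pow_zero]
  · have key : (sigma cs i * sigma cs j) ^ M i j = Sig cs (pl i j (M i j)) := (Sig_pl cs i j _).symm
    rw [key]
    apply Equiv.ext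
    intro p
    obtain ⟨t, e⟩ := p
    rw [Sig_apply, wordProd_pl, cs.simple_mul_simple_pow i j]
    have heven : Even ((ris (pl i j (M i j))).count t) := by
      rw [ris_pl, List.map_reverse, List.count_reverse, List.count_eq_countP,
        show 2 * M i j = M i j + M i j by ring, List.range_add, List.map_append,
        List.countP_append, List.countP_map, List.countP_map]
      have hper : ∀ k, (s j * s i) ^ (M i j + k) * s j = (s j * s i) ^ k * s j := by
        intro k
        rw [pow_add, cs.simple_mul_simple_pow' i j, one_mul]
      rw [List.countP_map]
      have hc : List.countP (((fun x => x == t) ∘ fun k => (s j * s i) ^ k * s j) ∘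
            fun k => M i j + k) (List.range (M i j))
          = List.countP ((fun x => x == t) ∘ fun k => (s j * s i) ^ k * s j)
            (List.range (M i j)) := by
        apply List.countP_congr
        intro k _
        simp only [Function.comp_apply, hper k]
      rw [hc]
      exact Even.add_self _
    rw [if_pos heven]
    simp

/-- The reflection permutation representation. -/
noncomputable def phi : W →* Equiv.Perm (W × ℤˣ) :=
  cs.lift ⟨fun i => sigma cs i, liftable cs⟩

lemma phi_simple (i : B) : phi cs (s i) = sigma cs i :=
  cs.lift_apply_simple (liftable cs) i

lemma phi_wordProd (ω : List B) : phi cs (π ω) = Sig cs ω := by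
  induction ω with
  | nil => simp [Sig]
  | cons i ω ih => rw [wordProd_cons, map_mul, phi_simple, ih, Sig_cons]

/-- The sign of a reflection `t` relative to `w`. -/
noncomputable def sgn (w t : W) : ℤˣ := ((phi cs w) (t, 1)).2

lemma sgn_wordProd (ω : List B) (t : W) :
    sgn cs (π ω) t = if Even ((ris ω).count t) then 1 else -1 := by
  unfold sgn
  rw [phi_wordProd, Sig_apply]

lemma phi_apply (w t : W) (e : ℤˣ) : (phi cs w) (t, e) = (w * t * w⁻¹, e * sgn cs w t) := by
  obtain ⟨ω, rfl⟩ := cs.wordProd_surjective w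
  rw [phi_wordProd, Sig_apply, sgn_wordProd]
  by_cases h : Even ((ris ω).count t)
  · rw [if_pos h, if_pos h, mul_one]
  · rw [if_neg h, if_neg h]
    simp

lemma sgn_one (t : W) : sgn cs 1 t = 1 := by
  unfold sgn
  rw [map_one]
  rfl

lemma sgn_simple (i : B) (t : W) : sgn cs (s i) t = if t = s i then -1 else 1 := by
  unfold sgn
  rw [phi_simple, sigma_apply]

lemma sgn_mul (w₁ w₂ t : W) :
    sgn cs (w₁ * w₂) t = sgn cs w₂ t * sgn cs w₁ (w₂ * t * w₂⁻¹) := by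
  unfold sgn
  rw [map_mul, Equiv.Perm.mul_apply, phi_apply, phi_apply, phi_apply]
  simp

lemma sgn_refl_self {t : W} (ht : cs.IsReflection t) : sgn cs t t = -1 := by
  obtain ⟨v, i, rfl⟩ := ht
  have h6 : sgn cs v⁻¹ (v * s i * v⁻¹) * sgn cs v (s i) = 1 := by
    rw [mul_comm, ← sgn_mul, inv_mul_cancel, sgn_one]
  have h2 : v⁻¹ * (v * s i * v⁻¹) * (v⁻¹)⁻¹ = s i := by group
  have h3 : s i * s i * (s i)⁻¹ = s i := by group
  rw [sgn_mul, h2, sgn_mul, sgn_simple, if_pos rfl, h3, neg_one_mul, mul_neg, h6]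

lemma sgn_mul_refl {t : W} (ht : cs.IsReflection t) (w : W) :
    sgn cs (w * t) t = - sgn cs w t := by
  rw [sgn_mul, sgn_refl_self cs ht]
  have : t * t * t⁻¹ = t := by rw [ht.mul_self, one_mul, ht.inv]
  rw [this, neg_one_mul]

lemma sgn_eq_one {t : W} (ht : cs.IsReflection t) :
    ∀ u : W, ℓ u < ℓ (u * t) → sgn cs u t = 1 := by
  have key : ∀ n : ℕ, ∀ u : W, ℓ u = n → ℓ u < ℓ (u * t) → sgn cs u t = 1 := by
    intro n
    induction n using Nat.strong_induction_on with
    | _ n IH =>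
      intro u hlen hlt
      rcases eq_or_ne u 1 with rfl | hne
      · exact sgn_one cs t
      · obtain ⟨i, hi⟩ := cs.exists_leftDescent_of_ne_one hne
        have hi' : ℓ (s i * u) < ℓ u := hi
        set u' := s i * u with hu'
        have hu : u = s i * u' := by rw [hu', cs.simple_mul_simple_cancel_left]
        by_cases hc : u' * t * u'⁻¹ = s i
        · exfalso
          have : u * t = u' := by
            rw [hu]
            have : u' * t = s i * u' := by
              calc u' * t = (u' * t * u'⁻¹) * u' := by group
                _ = s i * u' := by rw [hc]
            rw [mul_assoc, this, cs.simple_mul_simple_cancel_left]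
          rw [this] at hlt
          omega
        · have hsgn : sgn cs u t = sgn cs u' t := by
            rw [hu, sgn_mul, sgn_simple, if_neg hc, mul_one]
          have hlt' : ℓ u' < ℓ (u' * t) := by
            rcases Nat.lt_or_ge (ℓ u') (ℓ (u' * t)) with h | h
            · exact h
            · exfalso
              have hne' : ℓ (u' * t) ≠ ℓ u' := ht.length_mul_left_ne u'
              have h2 : ℓ (u' * t) < ℓ u' := lt_of_le_of_ne h hne'
              have h3 : ℓ (u * t) ≤ ℓ (u' * t) + 1 := by
                rw [hu, mul_assoc]
                rcases cs.length_simple_mul (u' * t) i with h4 | h4 <;> omega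
              omega
          rw [hsgn]
          exact IH (ℓ u') (by omega) u' rfl hlt'
  intro u
  exact key (ℓ u) u rfl

lemma sgn_eq_neg_one {t : W} (ht : cs.IsReflection t) (w : W) (hlt : ℓ (w * t) < ℓ w) :
    sgn cs w t = -1 := by
  have hw : w = (w * t) * t := by rw [mul_assoc, ht.mul_self, mul_one]
  rw [hw, sgn_mul_refl cs ht]
  have : ℓ (w * t) < ℓ ((w * t) * t) := by rw [← hw]; exact hlt
  rw [sgn_eq_one cs ht (w * t) this]

/-- Strong exchange property (left version, arbitrary words). -/
lemma strong_exchange {t : W} (ht : cs.IsReflection t) (ω : List B)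
    (hlt : ℓ (t * π ω) < ℓ (π ω)) :
    ∃ j, j < ω.length ∧ t * π ω = π (ω.eraseIdx j) := by
  have hmem : t ∈ lis ω := by
    have h1 : ℓ ((π ω.reverse) * t) < ℓ (π ω.reverse) := by
      rw [wordProd_reverse]
      have : ((π ω)⁻¹ * t)⁻¹ = t * π ω := by rw [mul_inv_rev, inv_inv, ht.inv]
      calc ℓ ((π ω)⁻¹ * t) = ℓ (((π ω)⁻¹ * t)⁻¹) := (cs.length_inv _).symm
        _ = ℓ (t * π ω) := by rw [this]
        _ < ℓ (π ω) := hlt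
        _ = ℓ ((π ω)⁻¹) := (cs.length_inv _).symm
    have hsgn : sgn cs (π ω.reverse) t = -1 := sgn_eq_neg_one cs ht _ h1
    rw [sgn_wordProd] at hsgn
    have hodd : ¬ Even ((ris ω.reverse).count t) := by
      intro h
      rw [if_pos h] at hsgn
      exact absurd hsgn (by decide)
    have hne : (ris ω.reverse).count t ≠ 0 := fun h => hodd (h ▸ Even.zero)
    have : t ∈ ris ω.reverse := by
      by_contra hmem
      exact hne (List.count_eq_zero.mpr hmem)
    rw [cs.rightInvSeq_reverse] at this
    exact List.mem_reverse.mp this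
  obtain ⟨j, hj, hje⟩ := List.getElem_of_mem hmem
  have hj' : j < ω.length := by
    have := cs.length_leftInvSeq ω
    omega
  refine ⟨j, hj', ?_⟩
  have hgd : (lis ω).getD j 1 = t := by
    rw [List.getD_eq_getElem _ _ hj, hje]
  rw [← hgd]
  exact cs.getD_leftInvSeq_mul_wordProd ω j

/-- Deletion property: every word has a reduced sublist with the same product. -/
lemma deletion (ω : List B) : ∃ τ : List B, τ.Sublist ω ∧ cs.IsReduced τ ∧ π τ = π ω := by
  induction ω with
  | nil => exact ⟨[], List.Sublist.refl _, by simp [CoxeterSystem.IsReduced], rfl⟩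
  | cons i ω ih =>
    obtain ⟨τ, hsub, hred, heq⟩ := ih
    by_cases h : ℓ (s i * π ω) < ℓ (π ω)
    · have h2 : ℓ (s i * π τ) < ℓ (π τ) := by rw [heq]; exact h
      obtain ⟨j, hj, hje⟩ := strong_exchange cs (cs.isReflection_simple i) τ h2
      refine ⟨τ.eraseIdx j, ((τ.eraseIdx_sublist j).trans hsub).cons i, ?_, ?_⟩
      · have hr : ℓ (π τ) = τ.length := hred
        have hlen : (τ.eraseIdx j).length = τ.length - 1 := by
          rw [List.length_eraseIdx]
          simp [hj]
        have : ℓ (π (τ.eraseIdx j)) = ℓ (s i * π ω) := by rw [← hje, heq]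
        have hlow : ℓ (s i * π ω) = ℓ (π ω) - 1 := by
          rcases cs.length_simple_mul (π ω) i with h4 | h4 <;> omega
        show ℓ (π (τ.eraseIdx j)) = (τ.eraseIdx j).length
        rw [this, hlow, hlen, ← heq, hr]
      · rw [← hje, heq, wordProd_cons]
    · have h2 : ℓ (π ω) < ℓ (s i * π ω) := by
        rcases lt_or_eq_of_le (not_lt.mp h) with h3 | h3
        · exact h3
        · exact absurd h3 (cs.length_simple_mul_ne (π ω) i).symm
      refine ⟨i :: τ, hsub.cons₂ i, ?_, ?_⟩
      · show ℓ (π (i :: τ)) = (i :: τ).length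
        rw [wordProd_cons, heq]
        have hr : ℓ (π ω) = τ.length := heq ▸ hred
        have : ℓ (s i * π ω) = ℓ (π ω) + 1 := by
          rcases cs.length_simple_mul (π ω) i with h4 | h4 <;> omega
        simp [this, hr]
      · rw [wordProd_cons, wordProd_cons, heq]

/-- One step of the Bruhat chain order. -/
def bstep (x y : W) : Prop :=
  ∃ t : W, cs.IsReflection t ∧ y = t * x ∧ ℓ x < ℓ y

/-- The Bruhat chain order. -/
def ble : W → W → Prop := Relation.ReflTransGen (bstep cs)

lemma ble_refl (x : W) : ble cs x x := Relation.ReflTransGen.refl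

lemma ble_trans {x y z : W} (h1 : ble cs x y) (h2 : ble cs y z) : ble cs x z :=
  Relation.ReflTransGen.trans h1 h2

lemma ble_length {x y : W} (h : ble cs x y) : ℓ x ≤ ℓ y := by
  induction h with
  | refl => exact le_refl _
  | tail _ hstep ih => obtain ⟨t, _, _, hlt⟩ := hstep; omega

lemma ble_one {v : W} (h : ble cs v 1) : v = 1 := by
  rcases Relation.ReflTransGen.cases_tail h with h1 | ⟨c, _, hstep⟩
  · exact h1.symm
  · obtain ⟨t, _, _, hlt⟩ := hstep
    simp at hlt

/-- Chains descend to subwords of arbitrary words (via strong exchange). -/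
lemma subword_of_ble {u w : W} (h : ble cs u w) :
    ∀ ω : List B, π ω = w → ∃ τ : List B, τ.Sublist ω ∧ π τ = u := by
  induction h with
  | refl => exact fun ω hω => ⟨ω, List.Sublist.refl _, hω⟩
  | @tail x z hux hstep ih =>
    intro ω hω
    obtain ⟨t, ht, hyx, hlt⟩ := hstep
    have hx : t * π ω = x := by
      rw [hω, hyx, ← mul_assoc, ht.mul_self, one_mul]
    have hlt' : ℓ (t * π ω) < ℓ (π ω) := by rw [hx, hω]; exact hlt
    obtain ⟨j, hj, hje⟩ := strong_exchange cs ht ω hlt'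
    obtain ⟨τ, hsub, hτ⟩ := ih (ω.eraseIdx j) (by rw [← hje, hx])
    exact ⟨τ, hsub.trans (ω.eraseIdx_sublist j), hτ⟩

lemma big : ∀ n : ℕ,
    (∀ ρ : List B, cs.IsReduced ρ → ρ.length = n →
      ∀ τ : List B, τ.Sublist ρ → ble cs (π τ) (π ρ)) ∧
    (∀ z u : W, ∀ j : B, ℓ z = n → ble cs u z → ℓ u < ℓ (s j * u) → ℓ z < ℓ (s j * z) →
      ble cs (s j * u) (s j * z)) ∧
    (∀ x u : W, ∀ j : B, ℓ x = n → ble cs u x → ℓ u < ℓ (s j * u) → ℓ (s j * x) < ℓ x →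
      ble cs u (s j * x)) := by
  intro n
  induction n using Nat.strong_induction_on with
  | _ n IH =>
  have hB : (∀ x u : W, ∀ j : B, ℓ x = n → ble cs u x → ℓ u < ℓ (s j * u) → ℓ (s j * x) < ℓ x →
      ble cs u (s j * x)) := by
    intro x u j hxn hux hsu hsx
    obtain ⟨ρ', hred', hw⟩ := cs.exists_reduced_word' (s j * x)
    have hxw : π (j :: ρ') = x := by rw [wordProd_cons, ← hw, cs.simple_mul_simple_cancel_left]
    obtain ⟨τ, hsub, hτ⟩ := subword_of_ble cs hux (j :: ρ') hxw
    obtain ⟨τ', hsub', hred'', hτ'⟩ := deletion cs τ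
    have hτ'' : π τ' = u := by rw [hτ', hτ]
    have hsubJ : τ'.Sublist (j :: ρ') := hsub'.trans hsub
    have hρlen : ρ'.length = n - 1 ∧ 1 ≤ n := by
      have h1 : ℓ (π ρ') = ρ'.length := hred'
      rw [← hw] at h1
      rcases cs.length_simple_mul x j with h4 | h4 <;> (constructor <;> omega)
    cases hsubJ with
    | cons _ h =>
      have := (IH (n - 1) (by omega)).1 ρ' hred' hρlen.1 τ' h
      rw [hτ'', ← hw] at this
      exact this
    | cons_cons _ h =>
      exfalso
      rename_i τ₂
      have h1 : ℓ (π (j :: τ₂)) = (j :: τ₂).length := hred''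
      have h2 : π τ₂ = s j * u := by
        rw [← hτ'', wordProd_cons, cs.simple_mul_simple_cancel_left]
      have h3 : ℓ (s j * u) ≤ τ₂.length := by
        rw [← h2]; exact cs.length_wordProd_le τ₂
      rw [hτ''] at h1
      simp only [List.length_cons] at h1
      omega
  have hC : (∀ z u : W, ∀ j : B, ℓ z = n → ble cs u z → ℓ u < ℓ (s j * u) → ℓ z < ℓ (s j * z) →
      ble cs (s j * u) (s j * z)) := by
    intro z u j hzn huz hsu hsz
    rcases Relation.ReflTransGen.cases_tail huz with heq | ⟨x, hux, hstep⟩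
    · rw [heq]
      exact Relation.ReflTransGen.refl
    · obtain ⟨t, ht, hzx, hlt⟩ := hstep
      by_cases hsx : ℓ x < ℓ (s j * x)
      · have h1 := (IH (ℓ x) (by omega)).2.1 x u j rfl hux hsu hsx
        have hstep2 : bstep cs (s j * x) (s j * z) := by
          refine ⟨s j * t * (s j)⁻¹, ht.conj (s j), ?_, ?_⟩
          · rw [hzx]; group
          · have hle : ℓ (s j * x) ≤ ℓ x + 1 := by
              rcases cs.length_simple_mul x j with h4 | h4 <;> omega
            omega
        exact h1.tail hstep2
      · have hsx' : ℓ (s j * x) < ℓ x :=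
          lt_of_le_of_ne (not_lt.mp hsx) (cs.length_simple_mul_ne x j)
        have hbx := (IH (ℓ x) (by omega)).2.2 x u j rfl hux hsu hsx'
        have hsxx : ℓ (s j * x) < ℓ (s j * (s j * x)) := by
          rw [cs.simple_mul_simple_cancel_left]; exact hsx'
        have h2 := (IH (ℓ (s j * x)) (by omega)).2.1 (s j * x) u j rfl hbx hsu hsxx
        rw [cs.simple_mul_simple_cancel_left] at h2
        have hstep3 : bstep cs x z := ⟨t, ht, hzx, hlt⟩
        have hstep4 : bstep cs z (s j * z) := ⟨s j, cs.isReflection_simple j, rfl, hsz⟩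
        exact (h2.tail hstep3).tail hstep4
  have hT2 : (∀ ρ : List B, cs.IsReduced ρ → ρ.length = n →
      ∀ τ : List B, τ.Sublist ρ → ble cs (π τ) (π ρ)) := by
    intro ρ hred hlen τ hsub
    cases ρ with
    | nil =>
      rw [List.sublist_nil.mp hsub]
      exact Relation.ReflTransGen.refl
    | cons j ρ₁ =>
      have hρ₁ : cs.IsReduced ρ₁ := by
        have := CoxeterSystem.IsReduced.drop (ω := j :: ρ₁) hred 1
        simpa using this
      have hl1 : ℓ (π ρ₁) = ρ₁.length := hρ₁
      have hl0 : ℓ (π (j :: ρ₁)) = ρ₁.length + 1 := by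
        have h0 : ℓ (π (j :: ρ₁)) = (j :: ρ₁).length := hred
        simpa using h0
      have hlen1 : ρ₁.length = n - 1 ∧ 1 ≤ n := by
        simp only [List.length_cons] at hlen
        constructor <;> omega
      have hasc : ℓ (π ρ₁) < ℓ (s j * π ρ₁) := by
        rw [← wordProd_cons]; omega
      have hstepρ : bstep cs (π ρ₁) (π (j :: ρ₁)) :=
        ⟨s j, cs.isReflection_simple j, (cs.wordProd_cons j ρ₁), by omega⟩
      cases hsub with
      | cons _ h =>
        have := (IH (n - 1) (by omega)).1 ρ₁ hρ₁ hlen1.1 τ h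
        exact this.tail hstepρ
      | cons_cons _ h =>
        rename_i τ₂
        have hu₂ := (IH (n - 1) (by omega)).1 ρ₁ hρ₁ hlen1.1 τ₂ h
        by_cases hc : ℓ (s j * π τ₂) < ℓ (π τ₂)
        · have hstep0 : bstep cs (π (j :: τ₂)) (π τ₂) := by
            refine ⟨s j, cs.isReflection_simple j, ?_, ?_⟩
            · rw [wordProd_cons, cs.simple_mul_simple_cancel_left]
            · rw [wordProd_cons]; exact hc
          exact Relation.ReflTransGen.head hstep0 (hu₂.tail hstepρ)
        · have hc' : ℓ (π τ₂) < ℓ (s j * π τ₂) :=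
            lt_of_le_of_ne (not_lt.mp hc) (cs.length_simple_mul_ne (π τ₂) j).symm
          have h2 := (IH (n - 1) (by omega)).2.1 (π ρ₁) (π τ₂) j
            (by omega) hu₂ hc' hasc
          rw [← wordProd_cons, ← wordProd_cons] at h2
          exact h2
  exact ⟨hT2, hC, hB⟩

/-- Subword of a reduced word implies Bruhat chain. -/
lemma ble_of_sublist {ρ τ : List B} (hred : cs.IsReduced ρ) (hsub : τ.Sublist ρ) :
    ble cs (π τ) (π ρ) :=
  (big cs ρ.length).1 ρ hred rfl τ hsub

/-- Lifting, descent form. -/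
lemma liftB {x u : W} {j : B} (hux : ble cs u x) (hsu : ℓ u < ℓ (s j * u))
    (hsx : ℓ (s j * x) < ℓ x) : ble cs u (s j * x) :=
  (big cs (ℓ x)).2.2 x u j rfl hux hsu hsx

/-- Lifting, both-descent form. -/
lemma liftA {w v : W} {j : B} (hvw : ble cs v w) (hsv : ℓ (s j * v) < ℓ v)
    (hsw : ℓ (s j * w) < ℓ w) : ble cs (s j * v) (s j * w) := by
  obtain ⟨ρ', hred', hw⟩ := cs.exists_reduced_word' (s j * w)
  have hjw : π (j :: ρ') = w := by rw [wordProd_cons, ← hw, cs.simple_mul_simple_cancel_left]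
  have hredJ : cs.IsReduced (j :: ρ') := by
    show ℓ (π (j :: ρ')) = (j :: ρ').length
    have h1 : ℓ (π ρ') = ρ'.length := hred'
    rw [← hw] at h1
    rw [hjw]
    simp only [List.length_cons]
    rcases cs.length_simple_mul w j with h4 | h4 <;> omega
  obtain ⟨τ, hsub, hτ⟩ := subword_of_ble cs hvw (j :: ρ') hjw
  obtain ⟨τ', hsub', hred'', hτ'⟩ := deletion cs τ
  have hτ'' : π τ' = v := by rw [hτ', hτ]
  have hsubJ : τ'.Sublist (j :: ρ') := hsub'.trans hsub
  cases hsubJ with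
  | cons _ h =>
    have h1 := ble_of_sublist cs hred' h
    rw [hτ'', ← hw] at h1
    have hstep : bstep cs (s j * v) v :=
      ⟨s j, cs.isReflection_simple j, (cs.simple_mul_simple_cancel_left (w := v) j).symm, hsv⟩
    exact Relation.ReflTransGen.head hstep h1
  | cons_cons _ h =>
    rename_i τ₂
    have h2 : π τ₂ = s j * v := by
      rw [← hτ'', wordProd_cons, cs.simple_mul_simple_cancel_left]
    have h1 := ble_of_sublist cs hred' h
    rw [h2, ← hw] at h1
    exact h1

lemma main_aux : ∀ (ω : List B) (v : W), ble cs v (demazureProd cs ω) →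
    π (leftMostWord cs ω v) = v ∧ cs.IsReduced (leftMostWord cs ω v) := by
  intro ω
  induction ω with
  | nil =>
    intro v hv
    have h1 : demazureProd cs [] = 1 := rfl
    rw [h1] at hv
    have hv1 : v = 1 := ble_one cs hv
    subst hv1
    have h0 : leftMostWord cs [] (1 : W) = [] := rfl
    rw [h0]
    exact ⟨cs.wordProd_nil, by simp [CoxeterSystem.IsReduced]⟩
  | cons i rest ih =>
    intro v hv
    have hd : demazureProd cs (i :: rest) =
        (if ℓ (s i * demazureProd cs rest) < ℓ (demazureProd cs rest)
         then demazureProd cs rest else s i * demazureProd cs rest) := rfl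
    set m := demazureProd cs rest with hm
    by_cases hvlt : ℓ (s i * v) < ℓ v
    · have hkey : ble cs (s i * v) m := by
        by_cases hmlt : ℓ (s i * m) < ℓ m
        · rw [hd, if_pos hmlt] at hv
          exact Relation.ReflTransGen.head
            ⟨s i, cs.isReflection_simple i, (cs.simple_mul_simple_cancel_left (w := v) i).symm,
              hvlt⟩ hv
        · rw [hd, if_neg hmlt] at hv
          have h2 : ℓ (s i * (s i * m)) < ℓ (s i * m) := by
            rw [cs.simple_mul_simple_cancel_left]
            exact lt_of_le_of_ne (not_lt.mp hmlt) (cs.length_simple_mul_ne m i).symm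
          have h3 := liftA cs hv hvlt h2
          rwa [cs.simple_mul_simple_cancel_left] at h3
      obtain ⟨hp, hr⟩ := ih (s i * v) hkey
      have heq : leftMostWord cs (i :: rest) v = i :: leftMostWord cs rest (s i * v) := by
        simp [leftMostWord, hvlt]
      rw [heq]
      constructor
      · rw [wordProd_cons, hp, cs.simple_mul_simple_cancel_left]
      · show ℓ (π (i :: leftMostWord cs rest (s i * v))) = (i :: leftMostWord cs rest (s i * v)).length
        rw [wordProd_cons, hp, cs.simple_mul_simple_cancel_left]
        have h5 : ℓ (s i * v) = (leftMostWord cs rest (s i * v)).length := by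
          have h5' : ℓ (π (leftMostWord cs rest (s i * v)))
              = (leftMostWord cs rest (s i * v)).length := hr
          rwa [hp] at h5'
        have h6 : ℓ v = ℓ (s i * v) + 1 := by
          rcases cs.length_simple_mul v i with h4 | h4 <;> omega
        simp only [List.length_cons]
        omega
    · have hvgt : ℓ v < ℓ (s i * v) :=
        lt_of_le_of_ne (not_lt.mp hvlt) (cs.length_simple_mul_ne v i).symm
      have hkey : ble cs v m := by
        by_cases hmlt : ℓ (s i * m) < ℓ m
        · rwa [hd, if_pos hmlt] at hv
        · rw [hd, if_neg hmlt] at hv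
          have h2 : ℓ (s i * (s i * m)) < ℓ (s i * m) := by
            rw [cs.simple_mul_simple_cancel_left]
            exact lt_of_le_of_ne (not_lt.mp hmlt) (cs.length_simple_mul_ne m i).symm
          have h3 := liftB cs hv hvgt h2
          rwa [cs.simple_mul_simple_cancel_left] at h3
      have heq : leftMostWord cs (i :: rest) v = leftMostWord cs rest v := by
        simp [leftMostWord, hvlt]
      rw [heq]
      exact ih v hkey

end LMAux

/-- **The left-most subexpression is a reduced expression for `v`.**
For any expression `𝐰` and any `v ≤ m_*(𝐰)` in Bruhat order, the left-most subexpression of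
`v` in `𝐰`, after removing the identity entries, is a reduced expression for `v`. -/
theorem leftMost_isReduced (cs : CoxeterSystem M W) (ω : List B) (v : W)
    (hv : bruhatLE cs v (demazureProd cs ω)) :
    cs.wordProd (leftMostWord cs ω v) = v ∧ cs.IsReduced (leftMostWord cs ω v) := by
  obtain ⟨ρ, hred, hprod, τ, hsub, hτ⟩ := hv
  have h1 : LMAux.ble cs v (demazureProd cs ω) := by
    have h2 := LMAux.ble_of_sublist cs hred hsub
    rwa [hτ, hprod] at h2
  exact LMAux.main_aux cs ω v h1
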